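/- Let X ∈ U(n, 2^s) be a balanced two-level lattice design with n ≥ 2, and map each entry to z_{ij} = (2 x_{ij} + 1)/4 ∈ {1/4, 3/4}. Then WL2²(X) − a_2 = (2/n²)(5/4)^s ∑_{1 ≤ i < k ≤ n} (6/5)^{β(x_i, x_k)} ≥ ((n−1)(5+f)/(5n)) (5/4)^s (6/5)^θ, where a_2 = (1/n)(3/2)^s − (4/3)^s, β̄ = s(n−2)/(2(n−1)), θ = ⌊β̄⌋ and f = β̄ − θ. -/

import Mathlib

open Finset

/-- The coincidence number β(x, w) = #{j : x_j = w_j} of two lattice points. -/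
def coincidence {s q : ℕ} (x w : Fin s → Fin q) : ℕ :=
  (univ.filter fun j => x j = w j).card

/-- A design `X ∈ U(n, q^s)` is balanced: `q ∣ n` and every level occurs exactly
`n / q` times in each column; here `q = 2`. -/
def IsBalanced {n s q : ℕ} (X : Fin n → Fin s → Fin q) : Prop :=
  q ∣ n ∧ ∀ (j : Fin s) (ℓ : Fin q),
    (univ.filter fun i => X i j = ℓ).card = n / q

/-- The index set of pairs 1 ≤ i < k ≤ n. -/
def pairs (n : ℕ) : Finset (Fin n × Fin n) := univ.filter fun p => p.1 < p.2

/-- The design points mapped to [0,1]: z_{ij} = (2 x_{ij} + 1)/4 ∈ {1/4, 3/4}. -/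
noncomputable def zpt2 {n s : ℕ} (X : Fin n → Fin s → Fin 2) (i : Fin n) (j : Fin s) : ℝ :=
  (2 * ((X i j : ℕ) : ℝ) + 1) / 4

/-- The squared wrap-around L₂-discrepancy of the induced point set. -/
noncomputable def WL2sq {n s : ℕ} (X : Fin n → Fin s → Fin 2) : ℝ :=
  -(4 / 3 : ℝ) ^ s
    + 1 / (n : ℝ) ^ 2 * ∑ i, ∑ k, ∏ j,
        (3 / 2 - |zpt2 X i j - zpt2 X k j| * (1 - |zpt2 X i j - zpt2 X k j|))

/-! On `{1/4, 3/4}` the wrap-around kernel is `3/2` at agreeing coordinates and `5/4` otherwise,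
so the kernel product of rows `x_i, x_k` is `(5/4)^s (6/5)^β(x_i, x_k)`. The diagonal (`β = s`)
produces `a₂`, and the off-diagonal part is twice the sum over `i < k`. For the bound, balance
fixes the total coincidence: each column contributes `n · n/2` agreeing ordered pairs, so the
average of `β` over the `n (n - 1) / 2` pairs `i < k` is `β̄`. Summing the convexity inequality
`(6/5)^β ≥ (6/5)^θ (1 + (β - θ)/5)` over these pairs gives the bound. -/

theorem Finset.sum_sum_eq_sum_diag_add_two_nsmul_sum_lt {ι M : Type*} [Fintype ι] [LinearOrder ι]
    [AddCommMonoid M] (F : ι → ι → M) (hF : ∀ i k, F i k = F k i) :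
    ∑ i, ∑ k, F i k =
      ∑ i, F i i + 2 • ∑ p ∈ univ.filter (fun p : ι × ι => p.1 < p.2), F p.1 p.2 := by
  have hsplit : ∀ i k, F i k =
      ((if i = k then F i k else 0) + if i < k then F i k else 0) + if k < i then F i k else 0 := by
    intro i k
    rcases lt_trichotomy i k with h | rfl | h
    · simp [h, h.ne, h.not_gt]
    · simp
    · simp [h, h.ne', h.not_gt]
  have hlower : ∑ i, ∑ k, (if k < i then F i k else 0) = ∑ i, ∑ k, if i < k then F i k else 0 := by
    rw [sum_comm]
    simp_rw [hF]
  conv_lhs => enter [2, i, 2, k]; rw [hsplit i k]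
  simp only [sum_add_distrib, sum_ite_eq, mem_univ, if_true, hlower, two_nsmul, sum_filter,
    Fintype.sum_prod_type' (fun i k => if i < k then F i k else 0), add_assoc]

theorem coincidence_comm {s q : ℕ} (x w : Fin s → Fin q) : coincidence x w = coincidence w x := by
  unfold coincidence
  simp_rw [eq_comm (a := x _)]

theorem coincidence_self {s q : ℕ} (x : Fin s → Fin q) : coincidence x x = s := by
  simp [coincidence]

theorem sum_sum_coincidence_of_isBalanced {n s q : ℕ} {X : Fin n → Fin s → Fin q}
    (hX : IsBalanced X) : ∑ i, ∑ k, coincidence (X i) (X k) = n * (s * (n / q)) := by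
  have hcol : ∀ i j, ∑ k, (if X i j = X k j then 1 else 0) = n / q := fun i j => by
    simp_rw [← card_filter, eq_comm (a := X i j), hX.2 j (X i j)]
  simp_rw [coincidence, card_filter]
  rw [sum_congr rfl fun i _ => sum_comm]
  simp [hcol]

theorem wrapKernel_zpt2 {n s : ℕ} (X : Fin n → Fin s → Fin 2) (i k : Fin n) (j : Fin s) :
    3 / 2 - |zpt2 X i j - zpt2 X k j| * (1 - |zpt2 X i j - zpt2 X k j|)
      = 5 / 4 * (6 / 5 : ℝ) ^ (if X i j = X k j then 1 else 0) := by
  unfold zpt2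
  generalize X i j = a
  generalize X k j = b
  fin_cases a <;> fin_cases b <;> norm_num [abs_of_nonneg, abs_of_nonpos]

theorem prod_wrapKernel_zpt2 {n s : ℕ} (X : Fin n → Fin s → Fin 2) (i k : Fin n) :
    ∏ j, (3 / 2 - |zpt2 X i j - zpt2 X k j| * (1 - |zpt2 X i j - zpt2 X k j|))
      = (5 / 4 : ℝ) ^ s * (6 / 5 : ℝ) ^ coincidence (X i) (X k) := by
  simp_rw [wrapKernel_zpt2, prod_mul_distrib, prod_pow_eq_pow_sum, coincidence, card_filter]
  simp only [prod_const, card_univ, Fintype.card_fin]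

section

variable {R : Type*} [CommRing R] [LinearOrder R] [IsStrictOrderedRing R]

theorem one_add_pow_mul_one_sub_mul_le_one {x : R} (hx : -1 ≤ x) (k : ℕ) :
    (1 + x) ^ k * (1 - k * x) ≤ 1 := by
  induction k with
  | zero => simp
  | succ k ih =>
    have hpow : 0 ≤ (1 + x) ^ k := pow_nonneg (by linarith) k
    calc (1 + x) ^ (k + 1) * (1 - (k + 1 : ℕ) * x)
        = (1 + x) ^ k * (1 - k * x) - (k + 1) * x ^ 2 * (1 + x) ^ k := by push_cast; ring
      _ ≤ 1 := by nlinarith [mul_nonneg (mul_nonneg (Nat.cast_add_one_pos k).le (sq_nonneg x)) hpow]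

/-- The slope `(1 + x) ^ θ * x` is that of the secant from `θ` to `θ + 1`, so this convexity
bound holds at every natural `b`, on both sides of `θ`. -/
theorem pow_mul_one_add_sub_mul_le_pow {x : R} (hx : -1 ≤ x) (θ b : ℕ) :
    (1 + x) ^ θ * (1 + ((b : R) - θ) * x) ≤ (1 + x) ^ b := by
  have hbase : 0 ≤ 1 + x := by linarith
  rcases le_total θ b with h | h
  · obtain ⟨k, rfl⟩ := Nat.exists_eq_add_of_le h
    rw [pow_add]
    push_cast
    rw [add_sub_cancel_left]
    exact mul_le_mul_of_nonneg_left (one_add_mul_le_pow (by linarith) k) (pow_nonneg hbase θ)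
  · obtain ⟨k, rfl⟩ := Nat.exists_eq_add_of_le h
    calc (1 + x) ^ (b + k) * (1 + ((b : R) - (b + k : ℕ)) * x)
        = (1 + x) ^ b * ((1 + x) ^ k * (1 - k * x)) := by push_cast; ring
      _ ≤ (1 + x) ^ b := mul_le_of_le_one_right (pow_nonneg hbase b)
          (one_add_pow_mul_one_sub_mul_le_one hx k)

end

theorem WL2sq_sub_eq_sum_pairs {n s : ℕ} (hn : n ≠ 0) (X : Fin n → Fin s → Fin 2) :
    WL2sq X - (1 / (n : ℝ) * (3 / 2 : ℝ) ^ s - (4 / 3 : ℝ) ^ s) =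
      2 / (n : ℝ) ^ 2 * (5 / 4 : ℝ) ^ s *
        ∑ p ∈ pairs n, (6 / 5 : ℝ) ^ coincidence (X p.1) (X p.2) := by
  have hsplit := sum_sum_eq_sum_diag_add_two_nsmul_sum_lt
    (fun i k => (6 / 5 : ℝ) ^ coincidence (X i) (X k)) (fun i k => by rw [coincidence_comm])
  simp only [coincidence_self, sum_const, card_univ, Fintype.card_fin, nsmul_eq_mul,
    Nat.cast_ofNat] at hsplit
  have hdiag : (5 / 4 : ℝ) ^ s * (6 / 5) ^ s = (3 / 2) ^ s := by rw [← mul_pow]; norm_num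
  simp_rw [WL2sq, prod_wrapKernel_zpt2, ← mul_sum, hsplit, pairs]
  field_simp
  linear_combination (n : ℝ) * hdiag

theorem card_pairs (n : ℕ) : (#(pairs n) : ℝ) = n * (n - 1) / 2 := by
  rw [pairs, Fintype.card_product_filter_lt, Fintype.card_fin, Nat.cast_choose_two]

theorem sum_pairs_coincidence_of_isBalanced {n s : ℕ} {X : Fin n → Fin s → Fin 2}
    (hX : IsBalanced X) :
    ∑ p ∈ pairs n, (coincidence (X p.1) (X p.2) : ℝ) = s * n * (n - 2) / 4 := by
  have hsplit := sum_sum_eq_sum_diag_add_two_nsmul_sum_lt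
    (fun i k => (coincidence (X i) (X k) : ℝ)) (fun i k => by rw [coincidence_comm])
  have htotal : ∑ i, ∑ k, (coincidence (X i) (X k) : ℝ) = n * (s * (n / 2)) := by
    have hhalf : ((n / 2 : ℕ) : ℝ) = n / 2 := by rw [Nat.cast_div_charZero hX.1, Nat.cast_ofNat]
    rw [← hhalf]
    exact_mod_cast sum_sum_coincidence_of_isBalanced hX
  simp only [coincidence_self, sum_const, card_univ, Fintype.card_fin, nsmul_eq_mul,
    Nat.cast_ofNat] at hsplit
  rw [pairs]
  linarith

theorem WL2sq_identity_and_bound_two_level_general (n s : ℕ) (hn : 2 ≤ n)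
    (X : Fin n → Fin s → Fin 2) (hX : IsBalanced X)
    (a₂ : ℝ) (ha₂ : a₂ = 1 / (n : ℝ) * (3 / 2 : ℝ) ^ s - (4 / 3 : ℝ) ^ s)
    (βbar : ℝ) (hβbar : βbar = (s : ℝ) * ((n : ℝ) - 2) / (2 * ((n : ℝ) - 1)))
    (θ : ℕ)
    (f : ℝ) (hf : f = βbar - θ) :
    WL2sq X - a₂ = 2 / (n : ℝ) ^ 2 * (5 / 4 : ℝ) ^ s *
        ∑ p ∈ pairs n, (6 / 5 : ℝ) ^ coincidence (X p.1) (X p.2) ∧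
      2 / (n : ℝ) ^ 2 * (5 / 4 : ℝ) ^ s *
          ∑ p ∈ pairs n, (6 / 5 : ℝ) ^ coincidence (X p.1) (X p.2)
        ≥ ((n : ℝ) - 1) * (5 + f) / (5 * n) * (5 / 4 : ℝ) ^ s * (6 / 5 : ℝ) ^ θ := by
  subst ha₂ hf hβbar
  refine ⟨WL2sq_sub_eq_sum_pairs (by omega) X, ?_⟩
  have hn1 : (n : ℝ) - 1 ≠ 0 := by
    have : (2 : ℝ) ≤ n := by exact_mod_cast hn
    linarith
  have hsecant (b : ℕ) : (6 / 5 : ℝ) ^ θ * (1 + ((b : ℝ) - θ) * (1 / 5)) ≤ (6 / 5) ^ b := by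
    simpa only [show (1 + 1 / 5 : ℝ) = 6 / 5 by norm_num] using
      pow_mul_one_add_sub_mul_le_pow (x := (1 / 5 : ℝ)) (by norm_num) θ b
  calc ((n : ℝ) - 1) * (5 + ((s : ℝ) * (n - 2) / (2 * (n - 1)) - θ)) / (5 * n)
          * (5 / 4) ^ s * (6 / 5) ^ θ
      = 2 / (n : ℝ) ^ 2 * (5 / 4) ^ s * ∑ p ∈ pairs n,
          (6 / 5 : ℝ) ^ θ * (1 + ((coincidence (X p.1) (X p.2) : ℝ) - θ) * (1 / 5)) := by
        simp only [← mul_sum, sum_add_distrib, ← sum_mul, sum_sub_distrib, sum_const,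
          nsmul_eq_mul, mul_one, sum_pairs_coincidence_of_isBalanced hX, card_pairs]
        field_simp
        ring
    _ ≤ 2 / (n : ℝ) ^ 2 * (5 / 4) ^ s *
          ∑ p ∈ pairs n, (6 / 5 : ℝ) ^ coincidence (X p.1) (X p.2) := by
        gcongr with p
        exact hsecant _

/-- Corollary 1 (two-level, wrap-around L₂-discrepancy):
WL₂²(X) − a₂ = (2/n²)(5/4)ˢ ∑_{i<k} (6/5)^{β(x_i,x_k)}
             ≥ ((n−1)(5+f)/(5n)) (5/4)ˢ (6/5)^θ. -/
theorem WL2sq_identity_and_bound_two_level (n s : ℕ) (hn : 2 ≤ n)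
    (X : Fin n → Fin s → Fin 2) (hX : IsBalanced X)
    (a₂ : ℝ) (ha₂ : a₂ = 1 / (n : ℝ) * (3 / 2 : ℝ) ^ s - (4 / 3 : ℝ) ^ s)
    (βbar : ℝ) (hβbar : βbar = (s : ℝ) * ((n : ℝ) - 2) / (2 * ((n : ℝ) - 1)))
    (θ : ℕ) (hθ : θ = ⌊βbar⌋₊)
    (f : ℝ) (hf : f = βbar - θ) :
    WL2sq X - a₂ = 2 / (n : ℝ) ^ 2 * (5 / 4 : ℝ) ^ s *
        ∑ p ∈ pairs n, (6 / 5 : ℝ) ^ coincidence (X p.1) (X p.2) ∧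
      2 / (n : ℝ) ^ 2 * (5 / 4 : ℝ) ^ s *
          ∑ p ∈ pairs n, (6 / 5 : ℝ) ^ coincidence (X p.1) (X p.2)
        ≥ ((n : ℝ) - 1) * (5 + f) / (5 * n) * (5 / 4 : ℝ) ^ s * (6 / 5 : ℝ) ^ θ :=
  WL2sq_identity_and_bound_two_level_general n s hn X hX a₂ ha₂ βbar hβbar θ f hf
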